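/- Reflection symmetry of optimal weights (Proposition): for every integer r ≥ 2, every l with 1 ≤ l ≤ r−1, and every function f : ℝ → ℝ, p^{r+l-1}_{r-1}[f](x_{j-1/2}) = Σ_{k=r-l}^{r-1} C^{r+l-1}_{l-1, r-1-k} · p^{r}_{k}[f](x_{j-1/2}); in other words, the (r+l−1, r−1)-optimal weights satisfy C^{r+l-1}_{r-1,k} = C^{r+l-1}_{l-1, r-1-k}. -/

import Mathlib

/-- Value at the midpoint `x₀ + (j - 1/2)·h` of the Lagrange interpolant of `f`
at the `a+1` equally spaced nodes `x_{j+b-a}, …, x_{j+b}` where `x_m = x₀ + m·h`. -/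
noncomputable def Pval (h x₀ : ℝ) (j a b : ℤ) (f : ℝ → ℝ) : ℝ :=
  (Lagrange.interpolate (Finset.Icc (j + b - a) (j + b)) (fun m : ℤ => x₀ + (m : ℝ) * h)
    (fun m : ℤ => f (x₀ + (m : ℝ) * h))).eval (x₀ + ((j : ℝ) - 1 / 2) * h)

/-- The general optimal weights `C^{r+l-1}_{l-1,k}`, for `1 ≤ l ≤ r` and `0 ≤ k ≤ l-1`. -/
noncomputable def C1 (r l k : ℕ) : ℝ :=
  (1 / 2 ^ (2 * l)) * (((r : ℝ) + (l : ℝ)) / (l : ℝ)) *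
    (((l : ℝ) - (k : ℝ)) / ((r : ℝ) - (k : ℝ))) *
    (Nat.choose l k : ℝ) * ((Nat.choose r k : ℝ))⁻¹ * (Nat.choose (2 * l) l : ℝ) *
    ((Nat.choose (l + r) r : ℝ))⁻¹ * (Nat.choose (2 * r) (2 * k + 1) : ℝ)

/-!
On equispaced nodes the big interpolant is a combination of the small ones with polynomial
weights, `p^{r+l-1}_{r-1} = Σ_{a+b=l-1} c_{a,b} ω_{a,b} p^r_{r-1-b}`, where `ω_{a,b}` is the
nodal polynomial of the `l-1` nodes of the big stencil outside the small one (`a` to its left,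
`b` to its right). Both sides interpolate `f` on the big stencil as soon as
`Σ c_{a,b} ω_{a,b} ≡ 1`, and with `c_{a,b} = (-1)^b C(l-1,a) / (h^{l-1} (r+l-1)_{l-1})` this
partition of unity is the Chu–Vandermonde identity for falling factorials. At the midpoint
`x_{j-1/2}` the factors of `ω_{a,b}` are half-integer multiples of `h`, and the weight
`c_{a,b} ω_{a,b}` becomes the closed form `C^{r+l-1}_{l-1,b}`.
-/

open Finset Polynomial Lagrange Nat

theorem descPochhammer_eval_add {R : Type*} [CommRing R] (x y : R) (n : ℕ) :
    (descPochhammer R n).eval (x + y) = ∑ ij ∈ antidiagonal n,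
      n.choose ij.1 * ((descPochhammer R ij.1).eval x * (descPochhammer R ij.2).eval y) := by
  simp only [← descPochhammer_map (algebraMap ℤ R), eval_map_algebraMap, aeval_eq_smeval]
  exact Ring.descPochhammer_smeval_add n (Commute.all x y)

theorem descPochhammer_eval_natCast_add_sub_half (m q : ℕ) :
    (descPochhammer ℝ q).eval (((m + q : ℕ) : ℝ) - 1 / 2) =
      (2 * (m + q))! * m ! / ((m + q)! * (2 * m)! * 4 ^ q) := by
  induction q generalizing m with
  | zero => simp [field]
  | succ q ih =>
    rw [descPochhammer_succ_eval, show m + (q + 1) = m + 1 + q by ring, ih (m + 1),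
      show 2 * (m + 1) = 2 * m + 1 + 1 by ring, factorial_succ (2 * m + 1), factorial_succ (2 * m),
      factorial_succ m]
    push_cast
    field_simp
    ring

theorem descPochhammer_eval_natCast_add_eq_factorial_div (m q : ℕ) :
    (descPochhammer ℝ q).eval ((m + q : ℕ) : ℝ) = (m + q)! / m ! := by
  have h := factorial_mul_descFactorial (Nat.le_add_left q m)
  rw [Nat.add_sub_cancel] at h
  rw [descPochhammer_eval_eq_descFactorial, eq_div_iff (by positivity), mul_comm]
  exact_mod_cast h

theorem Lagrange.interpolate_eq_sum_nodal_sdiff_mul_interpolate {F ι κ : Type*} [Field F]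
    [DecidableEq ι] {s : Finset ι} {v : ι → F} (hvs : Set.InjOn v s) {u : Finset κ}
    {T : κ → Finset ι} (hT : ∀ k ∈ u, T k ⊆ s) {c : κ → F}
    (hc : ∀ i ∈ s, ∑ k ∈ u, c k * (nodal (s \ T k) v).eval (v i) = 1) (r : ι → F) :
    interpolate s v r = ∑ k ∈ u, C (c k) * (nodal (s \ T k) v * interpolate (T k) v r) := by
  symm
  refine eq_interpolate_of_eval_eq _ hvs (lt_of_le_of_lt (degree_sum_le _ _) ?_) fun i hi => ?_
  · rw [Finset.sup_lt_iff (WithBot.bot_lt_coe _)]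
    intro k hk
    calc _ ≤ (nodal (s \ T k) v * interpolate (T k) v r).degree := by
          rw [← smul_eq_C_mul]; exact degree_smul_le _ _
      _ = #(s \ T k) + (interpolate (T k) v r).degree := by rw [degree_mul, degree_nodal]
      _ < #(s \ T k) + #(T k) :=
          (WithBot.add_lt_add_iff_left WithBot.coe_ne_bot).2
            (degree_interpolate_lt _ (hvs.mono (hT k hk)))
      _ = #s := by norm_cast; rw [card_sdiff_add_card_eq_card (hT k hk)]
  · rw [eval_finsetSum, ← mul_one (r i), ← hc i hi, mul_sum]
    refine sum_congr rfl fun k hk => ?_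
    rw [eval_mul, eval_mul, eval_C]
    by_cases hik : i ∈ T k
    · rw [eval_interpolate_at_node _ (hvs.mono (hT k hk)) hik]
      ring
    · rw [eval_nodal_at_node (mem_sdiff.2 ⟨hi, hik⟩)]
      ring

theorem prod_Ico_sub_intCast_eq_descPochhammer (y : ℝ) (a : ℤ) (n : ℕ) :
    ∏ m ∈ Ico a (a + n), (y - m) = (descPochhammer ℝ n).eval (y - a) := by
  induction n with
  | zero => simp
  | succ n ih =>
    rw [show Ico a (a + (n + 1 : ℕ)) = insert (a + n) (Ico a (a + n)) by ext; simp; omega,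
      prod_insert (by simp), ih, descPochhammer_succ_eval]
    push_cast
    ring

theorem prod_Ioc_sub_intCast_eq_descPochhammer (y : ℝ) (b : ℤ) (n : ℕ) :
    ∏ m ∈ Ioc (b - n) b, (y - m) = (-1) ^ n * (descPochhammer ℝ n).eval (b - y) := by
  induction n with
  | zero => simp
  | succ n ih =>
    rw [show Ioc (b - (n + 1 : ℕ)) b = insert (b - n) (Ioc (b - n) b) by ext; simp; omega,
      prod_insert (by simp), ih, descPochhammer_succ_eval]
    push_cast
    ring

theorem eval_nodal_Icc_sdiff_Icc (x₀ h y : ℝ) (lo : ℤ) {n p a b : ℕ} (hn : a + p + b = n) :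
    (nodal (Icc lo (lo + n) \ Icc (lo + a) (lo + a + p)) fun m : ℤ => x₀ + m * h).eval
        (x₀ + y * h) =
      (-1) ^ b * h ^ (a + b) * (descPochhammer ℝ a).eval (y - lo) *
        (descPochhammer ℝ b).eval (lo + n - y) := by
  have hsplit : Icc lo (lo + n) \ Icc (lo + a) (lo + a + p) =
      Ico lo (lo + a) ∪ Ioc (lo + n - b) (lo + n) := by
    ext; simp; omega
  have hdisj : Disjoint (Ico lo (lo + a)) (Ioc (lo + n - b) (lo + n)) := by
    rw [disjoint_left]; intro m; simp; omega
  have hsub : ∀ m : ℤ, x₀ + y * h - (x₀ + m * h) = (y - m) * h := fun m => by ring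
  simp only [eval_nodal, hsplit, prod_union hdisj, hsub, prod_mul_distrib, prod_const,
    Int.card_Ico, Int.card_Ioc, prod_Ico_sub_intCast_eq_descPochhammer,
    prod_Ioc_sub_intCast_eq_descPochhammer]
  push_cast
  rw [show (lo + a - lo).toNat = a by omega, show (lo + n - (lo + n - b)).toNat = b by omega]
  ring

/-- The constant `c_{a,b}` above, for small stencils of `p + 1` nodes in a big one of
`p + s + 1` nodes. -/
noncomputable def stencilWeight (h : ℝ) (p s a b : ℕ) : ℝ :=
  (-1) ^ b * s.choose a / (h ^ s * (descPochhammer ℝ s).eval ((p + s : ℕ) : ℝ))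

theorem C1_eq_choose_mul_descPochhammer {r s a b : ℕ} (hab : a + b = s) (hbr : b < r) :
    C1 r (s + 1) b = s.choose a * (descPochhammer ℝ a).eval ((s : ℝ) + 1 / 2) *
      (descPochhammer ℝ b).eval ((r : ℝ) - 1 / 2) /
        (descPochhammer ℝ s).eval ((r + s : ℕ) : ℝ) := by
  obtain ⟨c, rfl⟩ : ∃ c, r = c + 1 + b := ⟨r - b - 1, by omega⟩
  subst hab
  rw [show ((a + b : ℕ) : ℝ) + 1 / 2 = ((b + 1 + a : ℕ) : ℝ) - 1 / 2 by push_cast; ring,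
    descPochhammer_eval_natCast_add_sub_half, descPochhammer_eval_natCast_add_sub_half,
    descPochhammer_eval_natCast_add_eq_factorial_div,
    show b + 1 + a = a + b + 1 by ring]
  unfold C1
  rw [pow_mul, cast_choose ℝ (show b ≤ a + b + 1 by omega),
    cast_choose ℝ (show b ≤ c + 1 + b by omega),
    cast_choose ℝ (show a + b + 1 ≤ 2 * (a + b + 1) by omega),
    cast_choose ℝ (show c + 1 + b ≤ a + b + 1 + (c + 1 + b) by omega),
    cast_choose ℝ (show 2 * b + 1 ≤ 2 * (c + 1 + b) by omega),
    cast_choose ℝ (show a ≤ a + b by omega),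
    show a + b + 1 - b = a + 1 by omega, show c + 1 + b - b = c + 1 by omega,
    show 2 * (a + b + 1) - (a + b + 1) = a + b + 1 by omega,
    show a + b + 1 + (c + 1 + b) - (c + 1 + b) = a + b + 1 by omega,
    show 2 * (c + 1 + b) - (2 * b + 1) = 2 * c + 1 by omega, show a + b - a = b by omega,
    show a + b + 1 + (c + 1 + b) = c + 1 + b + (a + b) + 1 by omega,
    show 2 * (b + 1) = 2 * b + 1 + 1 by omega, show 2 * (c + 1) = 2 * c + 1 + 1 by omega,
    factorial_succ (c + 1 + b + (a + b)), factorial_succ (2 * b + 1), factorial_succ (2 * c + 1),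
    factorial_succ (a + b), factorial_succ a, factorial_succ b, factorial_succ c]
  push_cast
  field_simp
  ring

section EquispacedNodes

variable {x₀ h : ℝ}

theorem sum_stencilWeight_mul_eval_nodal_eq_one (hh : h ≠ 0) (lo : ℤ) (p s : ℕ) (y : ℝ) :
    ∑ ab ∈ antidiagonal s, stencilWeight h p s ab.1 ab.2 *
        (nodal (Icc lo (lo + (p + s : ℕ)) \ Icc (lo + ab.1) (lo + ab.1 + p))
          fun m : ℤ => x₀ + m * h).eval (x₀ + y * h) = 1 := by
  have hD : (descPochhammer ℝ s).eval ((p + s : ℕ) : ℝ) ≠ 0 := by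
    rw [descPochhammer_eval_natCast_add_eq_factorial_div]; positivity
  calc _ = ∑ ab ∈ antidiagonal s, s.choose ab.1 * ((descPochhammer ℝ ab.1).eval (y - lo) *
          (descPochhammer ℝ ab.2).eval (lo + (p + s : ℕ) - y)) /
            (descPochhammer ℝ s).eval ((p + s : ℕ) : ℝ) := by
        refine sum_congr rfl fun ab hab => ?_
        rw [HasAntidiagonal.mem_antidiagonal] at hab
        rw [stencilWeight, eval_nodal_Icc_sdiff_Icc _ _ _ _ (by omega : ab.1 + p + ab.2 = p + s),
          hab]
        field_simp
        rw [← pow_mul, pow_mul', neg_one_sq, one_pow, one_mul]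
    _ = 1 := by
        rw [← sum_div, ← descPochhammer_eval_add, show y - lo + (lo + (p + s : ℕ) - y) =
          ((p + s : ℕ) : ℝ) by ring, div_self hD]

theorem interpolate_Icc_eq_sum_stencilWeight_mul_interpolate (hh : h ≠ 0) (lo : ℤ) (p s : ℕ)
    (F : ℤ → ℝ) :
    interpolate (Icc lo (lo + (p + s : ℕ))) (fun m : ℤ => x₀ + m * h) F =
      ∑ ab ∈ antidiagonal s,
        C (stencilWeight h p s ab.1 ab.2) *
          (nodal (Icc lo (lo + (p + s : ℕ)) \ Icc (lo + ab.1) (lo + ab.1 + p))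
              (fun m : ℤ => x₀ + m * h) *
            interpolate (Icc (lo + ab.1) (lo + ab.1 + p)) (fun m : ℤ => x₀ + m * h) F) := by
  have hinj : Set.InjOn (fun m : ℤ => x₀ + m * h) (Icc lo (lo + (p + s : ℕ))) :=
    fun m _ n _ hmn => by simpa [hh] using hmn
  refine interpolate_eq_sum_nodal_sdiff_mul_interpolate hinj (fun ab hab => ?_)
    (fun i _ => sum_stencilWeight_mul_eval_nodal_eq_one hh lo p s i) F
  have := HasAntidiagonal.mem_antidiagonal.1 hab
  intro m
  simp only [mem_Icc]
  omega

theorem stencilWeight_mul_eval_nodal_midpoint (hh : h ≠ 0) (j : ℤ) {r s a b : ℕ}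
    (hab : a + b = s) (hbr : b < r) :
    stencilWeight h r s a b *
      (nodal (Icc (j - (s + 1 : ℕ)) (j - (s + 1 : ℕ) + (r + s : ℕ)) \
          Icc (j - (s + 1 : ℕ) + a) (j - (s + 1 : ℕ) + a + r)) fun m : ℤ => x₀ + m * h).eval
        (x₀ + (j - 1 / 2) * h) = C1 r (s + 1) b := by
  have hD : (descPochhammer ℝ s).eval ((r + s : ℕ) : ℝ) ≠ 0 := by
    rw [descPochhammer_eval_natCast_add_eq_factorial_div]; positivity
  rw [stencilWeight, eval_nodal_Icc_sdiff_Icc x₀ h _ _ (by omega : a + r + b = r + s),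
    C1_eq_choose_mul_descPochhammer hab hbr]
  push_cast
  rw [show (j : ℝ) - 1 / 2 - (j - (s + 1)) = s + 1 / 2 by ring,
    show (j : ℝ) - (s + 1) + (r + s) - (j - 1 / 2) = r - 1 / 2 by ring, hab]
  field_simp
  rw [← pow_mul, pow_mul', neg_one_sq, one_pow, one_mul]

end EquispacedNodes

theorem reflection_symmetry_optimal_weights (h x₀ : ℝ) (hh : 0 < h) (j : ℤ) (r : ℕ)
    (l : ℕ) (hl1 : 1 ≤ l) (hl2 : l ≤ r - 1) (f : ℝ → ℝ) :
    Pval h x₀ j ((r : ℤ) + (l : ℤ) - 1) ((r : ℤ) - 1) f =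
      ∑ k ∈ Finset.Icc (r - l) (r - 1), C1 r l (r - 1 - k) * Pval h x₀ j (r : ℤ) (k : ℤ) f := by
  obtain ⟨s, rfl⟩ : ∃ s, l = s + 1 := ⟨l - 1, by omega⟩
  have hbig : Icc (j + ((r : ℤ) - 1) - (r + (s + 1 : ℕ) - 1)) (j + ((r : ℤ) - 1)) =
      Icc (j - (s + 1 : ℕ)) (j - (s + 1 : ℕ) + (r + s : ℕ)) := by
    congr 1 <;> push_cast <;> ring
  unfold Pval
  rw [hbig, interpolate_Icc_eq_sum_stencilWeight_mul_interpolate hh.ne' _ r s, eval_finsetSum]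
  refine sum_nbij' (fun ab => r - 1 - ab.2) (fun k => (k - (r - (s + 1)), r - 1 - k))
    ?_ ?_ ?_ ?_ ?_ <;>
    simp only [HasAntidiagonal.mem_antidiagonal, mem_Icc, Prod.forall, Prod.mk.injEq]
  iterate 4 omega
  intro a b hab
  rw [eval_mul, eval_mul, eval_C, ← mul_assoc,
    stencilWeight_mul_eval_nodal_midpoint hh.ne' j hab (by omega),
    show r - 1 - (r - 1 - b) = b by omega]
  congr 5 <;> omega
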